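/- arXiv:1709.08495 — 2 statements merged into one kernel-verified Lean document; each statement's English description precedes it below -/
import Mathlib

section
/- Let a ∈ (0,1/2]. The three functions φ₁(t,θ) := -(z_a'(t)/x_a(t))·cos θ, φ₂(t,θ) := -(z_a'(t)/x_a(t))·sin θ and φ₃(t,θ) := x_a'(t)/x_a(t) — which are the three components of the Gauss map N_a = (∂_t X_a × ∂_θ X_a)/|∂_t X_a × ∂_θ X_a| of the conformal unduloid parametrization X_a(t,θ) = (x_a(t)cos θ, x_a(t)sin θ, z_a(t)) — each satisfy the Jacobi equation ∂_{tt}φ + ∂_{θθ}φ + 2p_a·φ = 0 on ℝ². -/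
noncomputable section

open Real Set

/-- Cross product in ℝ³. -/
def cross3 (v w : Fin 3 → ℝ) : Fin 3 → ℝ :=
  ![v 1 * w 2 - v 2 * w 1, v 2 * w 0 - v 0 * w 2, v 0 * w 1 - v 1 * w 0]

/-- Dot product in ℝ³. -/
def dot3 (v w : Fin 3 → ℝ) : ℝ := v 0 * w 0 + v 1 * w 1 + v 2 * w 2

/-- Euclidean norm in ℝ³. -/
def norm3 (v : Fin 3 → ℝ) : ℝ := Real.sqrt (dot3 v v)

/-- Partial derivative in the first variable of a curried map into ℝ³. -/
def Dt3 (Y : ℝ → ℝ → Fin 3 → ℝ) : ℝ → ℝ → Fin 3 → ℝ :=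
  fun t θ i => deriv (fun s => Y s θ i) t

/-- Partial derivative in the second variable of a curried map into ℝ³. -/
def Dth3 (Y : ℝ → ℝ → Fin 3 → ℝ) : ℝ → ℝ → Fin 3 → ℝ :=
  fun t θ i => deriv (fun s => Y t s i) θ

/-- Gauss map (unit normal) of a parametrized surface. -/
def gauss3 (Y : ℝ → ℝ → Fin 3 → ℝ) : ℝ → ℝ → Fin 3 → ℝ :=
  fun t θ i => cross3 (Dt3 Y t θ) (Dth3 Y t θ) i / norm3 (cross3 (Dt3 Y t θ) (Dth3 Y t θ))

/-- Mean curvature of a parametrized surface (Gaussian notation). -/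
def meanCurv (Y : ℝ → ℝ → Fin 3 → ℝ) (t θ : ℝ) : ℝ :=
  (dot3 (Dt3 Y t θ) (Dt3 Y t θ) * dot3 (Dth3 (Dth3 Y) t θ) (gauss3 Y t θ)
    - 2 * dot3 (Dt3 Y t θ) (Dth3 Y t θ) * dot3 (Dth3 (Dt3 Y) t θ) (gauss3 Y t θ)
    + dot3 (Dth3 Y t θ) (Dth3 Y t θ) * dot3 (Dt3 (Dt3 Y) t θ) (gauss3 Y t θ))
  / (2 * (dot3 (Dt3 Y t θ) (Dt3 Y t θ) * dot3 (Dth3 Y t θ) (Dth3 Y t θ)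
      - dot3 (Dt3 Y t θ) (Dth3 Y t θ) ^ 2))

/-- `x` is the unduloid profile function with neck-size `a`. -/
def IsUnduloid (a : ℝ) (x : ℝ → ℝ) : Prop :=
  ContDiff ℝ 2 x ∧
  (∀ t, deriv (deriv x) t = (1 - 2 * (a * (1 - a))) * x t - 2 * (x t) ^ 3) ∧
  x 0 = 1 - a ∧ deriv x 0 = 0

/-- The height function `z_a`. -/
def zshape (a : ℝ) (x : ℝ → ℝ) : ℝ → ℝ :=
  fun t => ∫ s in (0:ℝ)..t, (a * (1 - a) + x s ^ 2)

/-- `T` is the minimal (positive) period of `x`. -/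
def IsMinPeriod (x : ℝ → ℝ) (T : ℝ) : Prop :=
  0 < T ∧ Function.Periodic x T ∧ ∀ T', 0 < T' → Function.Periodic x T' → T ≤ T'

/-- The potential of the Jacobi operator. -/
def pfun (a : ℝ) (x : ℝ → ℝ) : ℝ → ℝ :=
  fun t => x t ^ 2 + (a * (1 - a)) ^ 2 / x t ^ 2

/-- `ψ` is the even solution of `ψ'' + 2 p_a ψ = 0`, `ψ(0)=1`, `ψ'(0)=0`. -/
def IsPsi0 (a : ℝ) (x : ℝ → ℝ) (ψ : ℝ → ℝ) : Prop :=
  ContDiff ℝ 2 ψ ∧ (∀ t, deriv (deriv ψ) t + 2 * pfun a x t * ψ t = 0) ∧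
  ψ 0 = 1 ∧ deriv ψ 0 = 0

/-- The generalized toroidal unduloid parametrization `X_{ε,a}`. -/
def Xtor (x z : ℝ → ℝ) (ε : ℝ) : ℝ → ℝ → Fin 3 → ℝ :=
  fun t θ =>
    ![x t * Real.cos θ,
      (ε⁻¹ + x t * Real.sin θ) * Real.cos (ε * z t),
      (ε⁻¹ + x t * Real.sin θ) * Real.sin (ε * z t)]

/-- Normal graph over a parametrized surface. -/
def normalGraph (X : ℝ → ℝ → Fin 3 → ℝ) (φ : ℝ → ℝ → ℝ) : ℝ → ℝ → Fin 3 → ℝ :=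
  fun t θ i => X t θ i + φ t θ * gauss3 X t θ i

/-- Rotation of angle σ about the x₁-axis. -/
def rot1 (σ : ℝ) (v : Fin 3 → ℝ) : Fin 3 → ℝ :=
  ![v 0, Real.cos σ * v 1 - Real.sin σ * v 2, Real.sin σ * v 1 + Real.cos σ * v 2]

/-- Partial derivative in `t` of a scalar function. -/
def dt (f : ℝ → ℝ → ℝ) : ℝ → ℝ → ℝ := fun t θ => deriv (fun s => f s θ) t

/-- Partial derivative in `θ` of a scalar function. -/
def dth (f : ℝ → ℝ → ℝ) : ℝ → ℝ → ℝ := fun t θ => deriv (fun s => f t s) θ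

/-- Global α-Hölder continuity of a scalar function on ℝ². -/
def Holder2 (α : ℝ) (f : ℝ → ℝ → ℝ) : Prop :=
  ∃ C : ℝ, ∀ p q : ℝ × ℝ, |f p.1 p.2 - f q.1 q.2| ≤ C * dist p q ^ α

/-- Membership in the space 𝒳_a of C^{2,α} doubly periodic symmetric functions. -/
def MemX (α τ : ℝ) (φ : ℝ → ℝ → ℝ) : Prop :=
  ContDiff ℝ 2 (fun p : ℝ × ℝ => φ p.1 p.2) ∧
  Holder2 α (dt (dt φ)) ∧ Holder2 α (dth (dt φ)) ∧ Holder2 α (dth (dth φ)) ∧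
  (∀ θ, Function.Periodic (fun t => φ t θ) (2 * τ)) ∧
  (∀ t, Function.Periodic (fun θ => φ t θ) (2 * Real.pi)) ∧
  (∀ t θ, φ (-t) θ = φ t θ) ∧
  (∀ t θ, φ t (Real.pi / 2 - θ) = φ t (Real.pi / 2 + θ))

/-- Membership in the space 𝒴_a of C^{0,α} doubly periodic symmetric functions. -/
def MemY (α τ : ℝ) (f : ℝ → ℝ → ℝ) : Prop :=
  Continuous (fun p : ℝ × ℝ => f p.1 p.2) ∧ Holder2 α f ∧
  (∀ θ, Function.Periodic (fun t => f t θ) (2 * τ)) ∧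
  (∀ t, Function.Periodic (fun θ => f t θ) (2 * Real.pi)) ∧
  (∀ t θ, f (-t) θ = f t θ) ∧
  (∀ t θ, f t (Real.pi / 2 - θ) = f t (Real.pi / 2 + θ))

/-- Integral over the fundamental rectangle Q_τ = [-τ,τ]×[-π,π]. -/
def intQ (τ : ℝ) (f : ℝ → ℝ → ℝ) : ℝ :=
  ∫ t in (-τ)..τ, ∫ θ in (-Real.pi)..Real.pi, f t θ

/-- The strip [s-δ, s+δ] × [-π,π]. -/
def strip (δ s : ℝ) : Set (ℝ × ℝ) :=
  Set.Icc (s - δ) (s + δ) ×ˢ Set.Icc (-Real.pi) Real.pi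

/-- Sup norm of a scalar function on a set. -/
def supOn (S : Set (ℝ × ℝ)) (g : ℝ → ℝ → ℝ) : ℝ :=
  sSup ((fun p : ℝ × ℝ => |g p.1 p.2|) '' S)

/-- α-Hölder seminorm of a scalar function on a set. -/
def holdOn (α : ℝ) (S : Set (ℝ × ℝ)) (g : ℝ → ℝ → ℝ) : ℝ :=
  sSup {r : ℝ | ∃ p ∈ S, ∃ q ∈ S, p ≠ q ∧ r = |g p.1 p.2 - g q.1 q.2| / dist p q ^ α}

/-- C^{0,α} norm on a set. -/
def c0αOn (α : ℝ) (S : Set (ℝ × ℝ)) (g : ℝ → ℝ → ℝ) : ℝ :=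
  supOn S g + holdOn α S g

/-- C^{2,α} norm on a set. -/
def c2αOn (α : ℝ) (S : Set (ℝ × ℝ)) (g : ℝ → ℝ → ℝ) : ℝ :=
  c0αOn α S g + c0αOn α S (dt g) + c0αOn α S (dth g)
    + c0αOn α S (dt (dt g)) + c0αOn α S (dth (dt g)) + c0αOn α S (dth (dth g))

/-- Weighted norm ‖f‖_{a,0,μ}. -/
def wnorm0 (α δ μ : ℝ) (x : ℝ → ℝ) (f : ℝ → ℝ → ℝ) : ℝ :=
  sSup {r : ℝ | ∃ s : ℝ, r = x s ^ (-μ) * c0αOn α (strip δ s) f}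

/-- Weighted norm ‖f‖_{a,2,μ}. -/
def wnorm2 (α δ μ : ℝ) (x : ℝ → ℝ) (f : ℝ → ℝ → ℝ) : ℝ :=
  sSup {r : ℝ | ∃ s : ℝ, r = x s ^ (-μ) * c2αOn α (strip δ s) f}

/-!
The functions φ₁, φ₂ are `-w(t)·cos θ`, `-w(t)·sin θ`
with `w = z'/x = (γ + x²)/x`, and φ₃ is `v = x'/x`, independent of θ; since `cos'' = -cos` and
`sin'' = -sin`, the claim reduces to the ODEs `w'' = (1 - 2p) w` and `v'' = -2p v`. Both follow by
differentiating, using `x'' = (1 - 2γ)x - 2x³` and its first integral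
`x'² = (1 - 2γ)x² - x⁴ - γ²`. The first integral also shows that `x` never vanishes when `γ ≠ 0`
(at a zero it would read `x'² = -γ²`), and gives `v' = γ²/x² - x²`.
-/

def jacobiOp (p : ℝ → ℝ) (φ : ℝ → ℝ → ℝ) (t θ : ℝ) : ℝ :=
  dt (dt φ) t θ + dth (dth φ) t θ + 2 * p t * φ t θ

theorem dt_dt_add_dth_dth_mul (f g : ℝ → ℝ) (t θ : ℝ) :
    dt (dt fun t θ => f t * g θ) t θ + dth (dth fun t θ => f t * g θ) t θ
      = deriv (deriv f) t * g θ + f t * deriv (deriv g) θ := by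
  simp only [dt, dth, deriv_mul_const_field', deriv_const_mul_field']

theorem dt_dt_add_dth_dth_const (f : ℝ → ℝ) (t θ : ℝ) :
    dt (dt fun t _ => f t) t θ + dth (dth fun t _ => f t) t θ = deriv (deriv f) t := by
  simp [dt, dth]

namespace IsUnduloid

variable {a : ℝ} {x : ℝ → ℝ}

theorem differentiable (hx : IsUnduloid a x) : Differentiable ℝ x :=
  hx.1.differentiable two_ne_zero

theorem hasDerivAt (hx : IsUnduloid a x) (t : ℝ) : HasDerivAt x (deriv x t) t :=
  (hx.differentiable t).hasDerivAt

theorem hasDerivAt_deriv (hx : IsUnduloid a x) (t : ℝ) :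
    HasDerivAt (deriv x) ((1 - 2 * (a * (1 - a))) * x t - 2 * x t ^ 3) t := by
  have hd : Differentiable ℝ (deriv x) :=
    (hx.1.iterate_deriv' 1 1).differentiable one_ne_zero
  exact hx.2.1 t ▸ (hd t).hasDerivAt

theorem deriv_sq (hx : IsUnduloid a x) (t : ℝ) :
    deriv x t ^ 2 = (1 - 2 * (a * (1 - a))) * x t ^ 2 - x t ^ 4 - (a * (1 - a)) ^ 2 := by
  have hE : ∀ s, HasDerivAt
      (fun s => deriv x s ^ 2 + x s ^ 4 - (1 - 2 * (a * (1 - a))) * x s ^ 2) 0 s := fun s => by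
    refine ((((hx.hasDerivAt_deriv s).fun_pow 2).fun_add ((hx.hasDerivAt s).fun_pow 4)).fun_sub
      (((hx.hasDerivAt s).fun_pow 2).const_mul (1 - 2 * (a * (1 - a))))).congr_deriv ?_
    push_cast
    ring
  have h := is_const_of_deriv_eq_zero (fun s => (hE s).differentiableAt) (fun s => (hE s).deriv) t 0
  simp only [hx.2.2.1, hx.2.2.2] at h
  linear_combination h

theorem ne_zero (hx : IsUnduloid a x) (ha : a * (1 - a) ≠ 0) (t : ℝ) : x t ≠ 0 := by
  intro h
  have h0 := hx.deriv_sq t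
  rw [h] at h0
  exact ha (by nlinarith [sq_nonneg (deriv x t)])

theorem deriv_zshape (hx : IsUnduloid a x) (t : ℝ) :
    deriv (zshape a x) t = a * (1 - a) + x t ^ 2 :=
  (continuous_const.add (hx.1.continuous.pow 2)).deriv_integral _ 0 t

theorem hasDerivAt_logDeriv (hx : IsUnduloid a x) (ha : a * (1 - a) ≠ 0) (t : ℝ) :
    HasDerivAt (logDeriv x) ((a * (1 - a)) ^ 2 / x t ^ 2 - x t ^ 2) t := by
  have hxt := hx.ne_zero ha t
  refine ((hx.hasDerivAt_deriv t).div (hx.hasDerivAt t) hxt).congr_deriv ?_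
  field_simp
  linear_combination -(hx.deriv_sq t)

theorem deriv_deriv_logDeriv (hx : IsUnduloid a x) (ha : a * (1 - a) ≠ 0) (t : ℝ) :
    deriv (deriv (logDeriv x)) t = -(2 * pfun a x t) * logDeriv x t := by
  rw [funext fun s => (hx.hasDerivAt_logDeriv ha s).deriv]
  have hxt := hx.ne_zero ha t
  refine (((hasDerivAt_const t ((a * (1 - a)) ^ 2)).fun_div ((hx.hasDerivAt t).fun_pow 2)
    (pow_ne_zero 2 hxt)).fun_sub ((hx.hasDerivAt t).fun_pow 2)).deriv.trans ?_
  simp only [pfun, logDeriv_apply]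
  field_simp
  ring

theorem hasDerivAt_deriv_zshape_div (hx : IsUnduloid a x) (ha : a * (1 - a) ≠ 0) (t : ℝ) :
    HasDerivAt (fun t => deriv (zshape a x) t / x t)
      (deriv x t * (x t ^ 2 - a * (1 - a)) / x t ^ 2) t := by
  simp only [hx.deriv_zshape]
  have hxt := hx.ne_zero ha t
  refine ((((hx.hasDerivAt t).fun_pow 2).const_add (a * (1 - a))).fun_div (hx.hasDerivAt t)
    hxt).congr_deriv ?_
  field_simp
  ring

theorem deriv_deriv_deriv_zshape_div (hx : IsUnduloid a x) (ha : a * (1 - a) ≠ 0) (t : ℝ) :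
    deriv (deriv fun t => deriv (zshape a x) t / x t) t
      = (1 - 2 * pfun a x t) * (deriv (zshape a x) t / x t) := by
  rw [funext fun s => (hx.hasDerivAt_deriv_zshape_div ha s).deriv]
  have hxt := hx.ne_zero ha t
  refine ((((hx.hasDerivAt_deriv t).fun_mul (((hx.hasDerivAt t).fun_pow 2).sub_const
    (a * (1 - a)))).fun_div ((hx.hasDerivAt t).fun_pow 2) (pow_ne_zero 2 hxt))).deriv.trans ?_
  rw [hx.deriv_zshape, pfun]
  push_cast
  field_simp
  linear_combination 2 * (a * (1 - a)) * hx.deriv_sq t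

theorem jacobiOp_cos (hx : IsUnduloid a x) (ha : a * (1 - a) ≠ 0) (t θ : ℝ) :
    jacobiOp (pfun a x) (fun t θ => -(deriv (zshape a x) t / x t) * cos θ) t θ = 0 := by
  rw [jacobiOp, dt_dt_add_dth_dth_mul]
  simp only [deriv.fun_neg', Real.deriv_cos', Real.deriv_sin,
    hx.deriv_deriv_deriv_zshape_div ha]
  ring

theorem jacobiOp_sin (hx : IsUnduloid a x) (ha : a * (1 - a) ≠ 0) (t θ : ℝ) :
    jacobiOp (pfun a x) (fun t θ => -(deriv (zshape a x) t / x t) * sin θ) t θ = 0 := by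
  rw [jacobiOp, dt_dt_add_dth_dth_mul]
  simp only [deriv.fun_neg', Real.deriv_cos', Real.deriv_sin,
    hx.deriv_deriv_deriv_zshape_div ha]
  ring

theorem jacobiOp_logDeriv (hx : IsUnduloid a x) (ha : a * (1 - a) ≠ 0) (t θ : ℝ) :
    jacobiOp (pfun a x) (fun t _ => logDeriv x t) t θ = 0 := by
  rw [jacobiOp, dt_dt_add_dth_dth_const, hx.deriv_deriv_logDeriv ha]
  ring

end IsUnduloid

/-- Lemma 4.1: the components of the Gauss map of the unduloid
satisfy the Jacobi equation. -/
theorem statement12 (a : ℝ) (ha : a ∈ Set.Ioc (0:ℝ) (1/2)) (x : ℝ → ℝ)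
    (hx : IsUnduloid a x) :
    let z := zshape a x
    let φ₁ : ℝ → ℝ → ℝ := fun t θ => -(deriv z t / x t) * Real.cos θ
    let φ₂ : ℝ → ℝ → ℝ := fun t θ => -(deriv z t / x t) * Real.sin θ
    let φ₃ : ℝ → ℝ → ℝ := fun t _ => deriv x t / x t
    (∀ t θ, dt (dt φ₁) t θ + dth (dth φ₁) t θ + 2 * pfun a x t * φ₁ t θ = 0) ∧
    (∀ t θ, dt (dt φ₂) t θ + dth (dth φ₂) t θ + 2 * pfun a x t * φ₂ t θ = 0) ∧
    (∀ t θ, dt (dt φ₃) t θ + dth (dth φ₃) t θ + 2 * pfun a x t * φ₃ t θ = 0) := by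
  have hγ : a * (1 - a) ≠ 0 := by
    obtain ⟨ha0, ha1⟩ := ha
    exact mul_ne_zero ha0.ne' (by linarith)
  exact ⟨hx.jacobiOp_cos hγ, hx.jacobiOp_sin hγ, hx.jacobiOp_logDeriv hγ⟩

end
end

section
/- Let μ ∈ (1,2) and C > 0. Suppose φ : ℝ² → ℝ is of class C², 2π-periodic in θ, even in t (φ(t,θ) = φ(-t,θ)), symmetric about θ = π/2 (φ(t,π/2-θ) = φ(t,π/2+θ)), satisfies ∂_{tt}φ + ∂_{θθ}φ + 2(sech t)²·φ = 0 on ℝ², and obeys the decay bound |φ(t,θ)| ≤ C·(sech t)^{μ} for all (t,θ) ∈ ℝ². Then φ ≡ 0. -/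
noncomputable section

open Real Set

/-!
Fix `t` and expand `φ t` in the Fourier modes `cos (n θ + β)`. Each coefficient
`u t = ∫ θ in -π..π, φ t θ * cos (n θ + β)` is even in `t`, is `O(sech^μ t)`, and (after two
periodic integrations by parts in `θ`) solves `u'' = (n² - 2 sech² t) u`. For `n = 0` the even
solutions are the multiples of `1 - t tanh t`, which grow linearly; for `n = ±1` they are the
multiples of `sech t`, which decay too slowly because `μ > 1`; for `|n| ≥ 2` the potential is
positive and the maximum principle kills every solution vanishing at `±∞`. Hence all Fourier
coefficients of `φ t` vanish, and so does `φ t`.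
-/

open MeasureTheory Filter Topology

namespace JacobiLiouville

def SolvesODE2 (q u u' : ℝ → ℝ) : Prop :=
  ∀ t, HasDerivAt u (u' t) t ∧ HasDerivAt u' (q t * u t) t

lemma _root_.HasDerivAt.eq_zero_of_even {u : ℝ → ℝ} {d : ℝ} (hu : HasDerivAt u d 0)
    (heven : ∀ t, u (-t) = u t) : d = 0 := by
  have h := deriv_comp_neg (f := u) (x := 0)
  simp only [heven, neg_zero, hu.deriv] at h
  linarith

namespace SolvesODE2

variable {q u u' w w' : ℝ → ℝ}

lemma continuous (hu : SolvesODE2 q u u') : Continuous u :=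
  continuous_iff_continuousAt.2 fun t => (hu t).1.continuousAt

lemma const_mul (hu : SolvesODE2 q u u') (a : ℝ) :
    SolvesODE2 q (fun t => a * u t) (fun t => a * u' t) := fun t =>
  ⟨(hu t).1.const_mul a, ((hu t).2.const_mul a).congr_deriv (by ring)⟩

lemma unique {K : ℝ} (hq : ∀ t, |q t| ≤ K) (hu : SolvesODE2 q u u')
    (hw : SolvesODE2 q w w') (t₀ : ℝ) (h₀ : u t₀ = w t₀) (h₀' : u' t₀ = w' t₀) : u = w := by
  have hlip : ∀ t, LipschitzWith (max 1 K.toNNReal) fun p : ℝ × ℝ => (p.2, q t * p.1) := fun t =>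
    LipschitzWith.prod_snd.prodMk <| ((lipschitzWith_smul (q t)).comp LipschitzWith.prod_fst).weaken
      (by rw [mul_one, ← NNReal.coe_le_coe, coe_nnnorm, Real.norm_eq_abs, Real.coe_toNNReal']
          exact (hq t).trans (le_max_left _ _))
  have := ODE_solution_unique_univ (t₀ := t₀) (s := fun _ => Set.univ)
      (f := fun t => (u t, u' t)) (g := fun t => (w t, w' t))
      (fun t => (hlip t).lipschitzOnWith) (fun t => ⟨(hu t).1.prodMk (hu t).2, trivial⟩)
      (fun t => ⟨(hw t).1.prodMk (hw t).2, trivial⟩) (by simp [h₀, h₀'])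
  exact funext fun t => congrArg Prod.fst (congrFun this t)

lemma eq_mul_of_even {K : ℝ} (hq : ∀ t, |q t| ≤ K) (hu : SolvesODE2 q u u')
    (hw : SolvesODE2 q w w') (hu_even : ∀ t, u (-t) = u t) (hw_even : ∀ t, w (-t) = w t)
    (hw₀ : w 0 = 1) : ∀ t, u t = u 0 * w t := by
  refine congrFun (hu.unique hq (hw.const_mul (u 0)) 0 (by simp [hw₀]) ?_)
  simp [(hu 0).1.eq_zero_of_even hu_even, (hw 0).1.eq_zero_of_even hw_even]

/-- At a positive global maximum `u'' = q u > 0` makes it also a local minimum, so `u` is locally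
constant there, contradicting `u'' > 0`. -/
lemma nonpos_of_tendsto (hq : ∀ t, 0 < q t) (hu : SolvesODE2 q u u')
    (hlim : Tendsto u (cocompact ℝ) (𝓝 0)) (t : ℝ) : u t ≤ 0 := by
  by_contra! ht
  obtain ⟨m, hm⟩ : ∃ m, ∀ s, u s ≤ u m :=
    hu.continuous.exists_forall_ge' t (hlim.eventually (eventually_le_nhds ht))
  have hderiv : deriv u = u' := funext fun s => (hu s).1.deriv
  have hconvex : 0 < deriv (deriv u) m := by
    rw [hderiv, (hu m).2.deriv]
    exact mul_pos (hq m) (ht.trans_le (hm t))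
  have hmax : IsLocalMax u m := Eventually.of_forall hm
  have hmin : IsLocalMin u m :=
    isLocalMin_of_deriv_deriv_pos hconvex hmax.deriv_eq_zero hu.continuous.continuousAt
  have hconst : u =ᶠ[𝓝 m] fun _ => u m := (hmin.and hmax).mono fun s hs => le_antisymm hs.2 hs.1
  have := hconst.deriv.deriv_eq
  simp only [deriv_const'] at this
  linarith

lemma eq_zero_of_tendsto (hq : ∀ t, 0 < q t) (hu : SolvesODE2 q u u')
    (hlim : Tendsto u (cocompact ℝ) (𝓝 0)) : u = 0 := by
  have hneg := (hu.const_mul (-1)).nonpos_of_tendsto hq (by simpa using hlim.const_mul (-1))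
  ext t
  rw [Pi.zero_apply]
  exact le_antisymm (hu.nonpos_of_tendsto hq hlim t) (by linarith [hneg t])

end SolvesODE2

/-- The `n`-th Fourier mode in `θ` of a solution of `Δφ + 2 sech² t · φ = 0` solves
`u'' = jacobiPotential (n ^ 2) t * u`. -/
def jacobiPotential (c t : ℝ) : ℝ := c - 2 * (cosh t)⁻¹ ^ 2

lemma sech_pos (t : ℝ) : 0 < (cosh t)⁻¹ := inv_pos.2 (cosh_pos t)

lemma sech_le_one (t : ℝ) : (cosh t)⁻¹ ≤ 1 := inv_le_one_of_one_le₀ (one_le_cosh t)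

lemma abs_jacobiPotential_le (c t : ℝ) : |jacobiPotential c t| ≤ |c| + 2 := by
  have h₀ := sech_pos t
  have h₁ := sech_le_one t
  calc |jacobiPotential c t| ≤ |c| + |2 * (cosh t)⁻¹ ^ 2| := abs_sub _ _
    _ ≤ |c| + 2 := by
      rw [abs_of_pos (by positivity : (0 : ℝ) < 2 * (cosh t)⁻¹ ^ 2)]
      nlinarith

lemma jacobiPotential_pos {c : ℝ} (hc : 2 < c) (t : ℝ) : 0 < jacobiPotential c t := by
  have h₀ := sech_pos t
  have h₁ := sech_le_one t
  unfold jacobiPotential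
  nlinarith

lemma sech_le_two_mul_exp_neg_abs (t : ℝ) : (cosh t)⁻¹ ≤ 2 * exp (-|t|) := by
  rw [← cosh_abs, cosh_eq, exp_neg, ← div_eq_mul_inv, inv_div]
  gcongr
  linarith [inv_pos.2 (exp_pos |t|)]

lemma tendsto_sech_rpow_cocompact {μ : ℝ} (hμ : 0 < μ) :
    Tendsto (fun t => (cosh t)⁻¹ ^ μ) (cocompact ℝ) (𝓝 0) := by
  have hexp : Tendsto (fun t : ℝ => 2 * exp (-|t|)) (cocompact ℝ) (𝓝 0) := by
    simpa using
      (tendsto_exp_neg_atTop_nhds_zero.comp (tendsto_norm_cocompact_atTop (E := ℝ))).const_mul 2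
  have hsech := squeeze_zero (fun t => (sech_pos t).le) sech_le_two_mul_exp_neg_abs hexp
  simpa [zero_rpow hμ.ne'] using hsech.rpow_const (Or.inr hμ.le)

lemma solvesODE2_sech :
    SolvesODE2 (jacobiPotential 1) (fun t => (cosh t)⁻¹) (fun t => -sinh t / cosh t ^ 2) := by
  intro t
  have hc := (cosh_pos t).ne'
  refine ⟨(hasDerivAt_cosh t).inv hc, ?_⟩
  have := ((hasDerivAt_sinh t).div ((hasDerivAt_cosh t).pow 2) (pow_ne_zero 2 hc)).neg
  rw [show (fun s => -sinh s / cosh s ^ 2) = -(sinh / cosh ^ 2) by ext; simp [neg_div]]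
  refine this.congr_deriv ?_
  simp only [jacobiPotential, Pi.pow_apply]
  field_simp
  linear_combination (-2 * cosh t) * cosh_sq_sub_sinh_sq t

def jacobiEven (t : ℝ) : ℝ := 1 - t * sinh t / cosh t

lemma solvesODE2_jacobiEven :
    SolvesODE2 (jacobiPotential 0) jacobiEven (fun t => -(sinh t / cosh t) - t / cosh t ^ 2) := by
  intro t
  have hc := (cosh_pos t).ne'
  constructor
  · have := (hasDerivAt_const t (1 : ℝ)).sub
      (((hasDerivAt_id t).mul (hasDerivAt_sinh t)).div (hasDerivAt_cosh t) hc)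
    refine this.congr_deriv ?_
    simp only [id, Pi.mul_apply]
    field_simp
    linear_combination (-t) * cosh_sq_sub_sinh_sq t
  · have := ((hasDerivAt_sinh t).div (hasDerivAt_cosh t) hc).neg.sub
      ((hasDerivAt_id t).div ((hasDerivAt_cosh t).pow 2) (pow_ne_zero 2 hc))
    rw [show (fun s => -(sinh s / cosh s) - s / cosh s ^ 2) = -(sinh / cosh) - id / cosh ^ 2 by
      ext; simp]
    refine this.congr_deriv ?_
    simp only [jacobiPotential, jacobiEven, Pi.pow_apply, id]
    field_simp
    linear_combination (-cosh t ^ 2) * cosh_sq_sub_sinh_sq t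

lemma jacobiEven_le {t : ℝ} (ht : 0 ≤ t) : jacobiEven t ≤ 2 - t := by
  have hdecay : t * exp (-t) ≤ cosh t := by
    rw [exp_neg, ← div_eq_mul_inv, div_le_iff₀ (exp_pos t)]
    nlinarith [add_one_le_exp t, one_le_cosh t, exp_pos t]
  rw [← cosh_sub_sinh] at hdecay
  have hc := cosh_pos t
  rw [jacobiEven, sub_le_sub_iff, ← sub_le_iff_le_add', le_div_iff₀ hc]
  linarith

lemma jacobiEven_neg (t : ℝ) : jacobiEven (-t) = jacobiEven t := by
  simp [jacobiEven, sinh_neg, cosh_neg]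

variable {u u' : ℝ → ℝ}

lemma eq_zero_of_jacobiPotential_zero (hu : SolvesODE2 (jacobiPotential 0) u u')
    (heven : ∀ t, u (-t) = u t) {C : ℝ} (hbdd : ∀ t, |u t| ≤ C) : u = 0 := by
  have hrep := hu.eq_mul_of_even (abs_jacobiPotential_le 0) solvesODE2_jacobiEven heven
    jacobiEven_neg (by simp [jacobiEven])
  suffices u 0 = 0 by ext t; simp [hrep t, this]
  by_contra h
  have hpos : 0 < |u 0| := abs_pos.2 h
  have hC : 0 ≤ C / |u 0| := div_nonneg ((abs_nonneg _).trans (hbdd 0)) hpos.le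
  set t := 3 + C / |u 0|
  have hψ : t - 2 ≤ |jacobiEven t| := by
    have := jacobiEven_le (t := t) (by linarith)
    rw [abs_of_nonpos (by linarith)]
    linarith
  have hgrowth : |u 0| * (t - 2) = |u 0| + C := by
    simp only [t]
    field_simp
    ring
  have := hbdd t
  rw [hrep t, abs_mul] at this
  nlinarith

lemma eq_zero_of_jacobiPotential_one (hu : SolvesODE2 (jacobiPotential 1) u u')
    (heven : ∀ t, u (-t) = u t) {C μ : ℝ} (hμ : 1 < μ)
    (hdec : ∀ t, |u t| ≤ C * (cosh t)⁻¹ ^ μ) : u = 0 := by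
  have hrep := hu.eq_mul_of_even (abs_jacobiPotential_le 1) solvesODE2_sech heven
    (fun t => by simp [cosh_neg]) (by simp)
  suffices u 0 = 0 by ext t; simp [hrep t, this]
  have hbound : ∀ t, |u 0| ≤ C * (cosh t)⁻¹ ^ (μ - 1) := fun t => by
    have := hdec t
    rw [hrep t, abs_mul, abs_of_pos (sech_pos t), ← le_div_iff₀ (sech_pos t)] at this
    rwa [rpow_sub_one (sech_pos t).ne', ← mul_div_assoc]
  have hlim :=
    ((tendsto_sech_rpow_cocompact (sub_pos.2 hμ)).mono_left atTop_le_cocompact).const_mul C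
  rw [mul_zero] at hlim
  exact abs_eq_zero.1 (le_antisymm (ge_of_tendsto' hlim hbound) (abs_nonneg _))

lemma eq_zero_of_jacobiPotential_intCast_sq (n : ℤ)
    (hu : SolvesODE2 (jacobiPotential ((n : ℝ) ^ 2)) u u') (heven : ∀ t, u (-t) = u t)
    {C μ : ℝ} (hμ : 1 < μ)
    (hdec : ∀ t, |u t| ≤ C * (cosh t)⁻¹ ^ μ) : u = 0 := by
  obtain ⟨m, hm⟩ : ∃ m : ℕ, (n : ℝ) ^ 2 = (m : ℝ) ^ 2 :=
    ⟨n.natAbs, by simp [Nat.cast_natAbs, sq_abs]⟩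
  rw [hm] at hu
  rcases m with _ | _ | m
  · refine eq_zero_of_jacobiPotential_zero (by simpa using hu) heven (C := |C|) fun t =>
      (hdec t).trans ?_
    have h₀ : 0 ≤ (cosh t)⁻¹ ^ μ := rpow_nonneg (sech_pos t).le μ
    have h₁ : (cosh t)⁻¹ ^ μ ≤ 1 := rpow_le_one (sech_pos t).le (sech_le_one t) (by linarith)
    exact (mul_le_mul_of_nonneg_right (le_abs_self C) h₀).trans
      (mul_le_of_le_one_right (abs_nonneg C) h₁)
  · exact eq_zero_of_jacobiPotential_one (by simpa using hu) heven hμ hdec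
  · have hm : (0 : ℝ) ≤ m := m.cast_nonneg
    refine hu.eq_zero_of_tendsto (jacobiPotential_pos (by push_cast; nlinarith)) ?_
    have hlim := (tendsto_sech_rpow_cocompact (μ := μ) (by linarith)).const_mul C
    rw [mul_zero] at hlim
    exact squeeze_zero_norm hdec hlim

lemma hasDerivAt_dt {f : ℝ → ℝ → ℝ} (hf : Differentiable ℝ (Function.uncurry f)) (t θ : ℝ) :
    HasDerivAt (fun s => f s θ) (dt f t θ) t :=
  ((hf.comp (differentiable_id.prodMk (differentiable_const θ))) t).hasDerivAt

lemma hasDerivAt_dth {f : ℝ → ℝ → ℝ} (hf : Differentiable ℝ (Function.uncurry f)) (t θ : ℝ) :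
    HasDerivAt (fun s => f t s) (dth f t θ) θ :=
  ((hf.comp ((differentiable_const t).prodMk differentiable_id)) θ).hasDerivAt

lemma contDiff_dt {f : ℝ → ℝ → ℝ} {m n : WithTop ℕ∞} (hf : ContDiff ℝ n (Function.uncurry f))
    (hmn : m + 1 ≤ n) : ContDiff ℝ m (Function.uncurry (dt f)) := by
  have hdiff := hf.differentiable (zero_lt_one.trans_le (le_add_self.trans hmn)).ne'
  have : Function.uncurry (dt f) = fun p => fderiv ℝ (Function.uncurry f) p (1, 0) := by
    ext ⟨t, θ⟩
    exact ((hdiff (t, θ)).hasFDerivAt.comp_hasDerivAt t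
      ((hasDerivAt_id t).prodMk (hasDerivAt_const t θ))).deriv
  rw [this]
  exact (hf.fderiv_right hmn).clm_apply contDiff_const

lemma contDiff_dth {f : ℝ → ℝ → ℝ} {m n : WithTop ℕ∞} (hf : ContDiff ℝ n (Function.uncurry f))
    (hmn : m + 1 ≤ n) : ContDiff ℝ m (Function.uncurry (dth f)) := by
  have hdiff := hf.differentiable (zero_lt_one.trans_le (le_add_self.trans hmn)).ne'
  have : Function.uncurry (dth f) = fun p => fderiv ℝ (Function.uncurry f) p (0, 1) := by
    ext ⟨t, θ⟩
    exact ((hdiff (t, θ)).hasFDerivAt.comp_hasDerivAt θ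
      ((hasDerivAt_const θ t).prodMk (hasDerivAt_id θ))).deriv
  rw [this]
  exact (hf.fderiv_right hmn).clm_apply contDiff_const

lemma hasDerivAt_integral_of_continuous {F F' : ℝ → ℝ → ℝ}
    (hF : ∀ t θ, HasDerivAt (fun s => F s θ) (F' t θ) t) (hFc : Continuous (Function.uncurry F))
    (hF'c : Continuous (Function.uncurry F')) (a b t₀ : ℝ) :
    HasDerivAt (fun t => ∫ θ in a..b, F t θ) (∫ θ in a..b, F' t₀ θ) t₀ := by
  obtain ⟨M, hM⟩ := ((isCompact_closedBall t₀ 1).prod (isCompact_uIcc (a := a) (b := b))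
    ).exists_bound_of_continuousOn hF'c.continuousOn
  have hslice : ∀ {G : ℝ → ℝ → ℝ}, Continuous (Function.uncurry G) → ∀ t, Continuous (G t) :=
    fun hG t => hG.comp (continuous_const.prodMk continuous_id)
  refine (intervalIntegral.hasDerivAt_integral_of_dominated_loc_of_deriv_le (bound := fun _ => M)
    (Metric.ball_mem_nhds t₀ one_pos)
    (Eventually.of_forall fun t => (hslice hFc t).aestronglyMeasurable)
    ((hslice hFc t₀).intervalIntegrable _ _) (hslice hF'c t₀).aestronglyMeasurable
    (ae_of_all _ fun θ hθ t ht => hM (t, θ) ⟨Metric.ball_subset_closedBall ht, uIoc_subset_uIcc hθ⟩)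
    intervalIntegrable_const (ae_of_all _ fun θ _ t _ => hF t θ)).2

lemma _root_.Function.Periodic.deriv {f : ℝ → ℝ} {c : ℝ} (hf : Function.Periodic f c) :
    Function.Periodic (deriv f) c := fun x => by
  rw [← deriv_comp_add_const, show (fun y => f (y + c)) = f from funext hf]

lemma integral_mul_deriv_eq_neg_of_boundary {a b : ℝ} {u u' v v' : ℝ → ℝ}
    (hu : ∀ x, HasDerivAt u (u' x) x) (hv : ∀ x, HasDerivAt v (v' x) x)
    (hu' : Continuous u') (hv' : Continuous v') (hab : u a * v a = u b * v b) :
    ∫ x in a..b, u x * v' x = -∫ x in a..b, u' x * v x := by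
  rw [intervalIntegral.integral_mul_deriv_eq_deriv_mul (fun x _ => hu x) (fun x _ => hv x)
    (hu'.intervalIntegrable _ _) (hv'.intervalIntegrable _ _), hab, sub_self, zero_sub]

variable {φ : ℝ → ℝ → ℝ} {c : ℝ} {g g' : ℝ → ℝ}

lemma solvesODE2_integral_mul (hreg : ContDiff ℝ 2 (Function.uncurry φ))
    (hper : ∀ t, Function.Periodic (φ t) (2 * π))
    (hpde : ∀ t θ, dt (dt φ) t θ + dth (dth φ) t θ + 2 * (cosh t)⁻¹ ^ 2 * φ t θ = 0)
    (hg : ∀ θ, HasDerivAt g (g' θ) θ) (hg' : ∀ θ, HasDerivAt g' (-c * g θ) θ)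
    (hg'c : Continuous g') (hgπ : g (-π) = g π) (hg'π : g' (-π) = g' π) :
    SolvesODE2 (jacobiPotential c) (fun t => ∫ θ in -π..π, φ t θ * g θ)
      (fun t => ∫ θ in -π..π, dt φ t θ * g θ) := by
  have hgc : Continuous g := continuous_iff_continuousAt.2 fun θ => (hg θ).continuousAt
  have hφ_t : ContDiff ℝ 1 (Function.uncurry (dt φ)) := contDiff_dt hreg (by norm_num)
  have hφ_θ : ContDiff ℝ 1 (Function.uncurry (dth φ)) := contDiff_dth hreg (by norm_num)
  have hφ_tt : Continuous (Function.uncurry (dt (dt φ))) :=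
    (contDiff_dt hφ_t (m := 0) (by norm_num)).continuous
  have hφ_θθ : Continuous (Function.uncurry (dth (dth φ))) :=
    (contDiff_dth hφ_θ (m := 0) (by norm_num)).continuous
  have hmul : ∀ {F : ℝ → ℝ → ℝ}, Continuous (Function.uncurry F) →
      Continuous (Function.uncurry fun t θ => F t θ * g θ) :=
    fun hF => hF.mul (hgc.comp continuous_snd)
  intro t
  refine ⟨hasDerivAt_integral_of_continuous
    (fun t θ => (hasDerivAt_dt (hreg.differentiable two_ne_zero) t θ).mul_const (g θ))
    (hmul hreg.continuous) (hmul hφ_t.continuous) _ _ t, ?_⟩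
  refine (hasDerivAt_integral_of_continuous
    (fun t θ => (hasDerivAt_dt (hφ_t.differentiable one_ne_zero) t θ).mul_const (g θ))
    (hmul hφ_t.continuous) (hmul hφ_tt) _ _ t).congr_deriv ?_
  have hslice : ∀ {F : ℝ → ℝ → ℝ}, Continuous (Function.uncurry F) → Continuous (F t) :=
    fun hF => hF.comp (continuous_const.prodMk continuous_id)
  have hπ : -π + 2 * π = π := by ring
  have hφπ : φ t (-π) = φ t π := (hπ ▸ hper t (-π)).symm
  have hφ'π : dth φ t (-π) = dth φ t π := (hπ ▸ (hper t).deriv (-π)).symm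
  have hparts : ∫ θ in -π..π, g θ * dth (dth φ) t θ = -c * ∫ θ in -π..π, φ t θ * g θ := by
    rw [integral_mul_deriv_eq_neg_of_boundary hg
        (hasDerivAt_dth (hφ_θ.differentiable one_ne_zero) t) hg'c (hslice hφ_θθ)
        (by rw [hgπ, hφ'π]),
      integral_mul_deriv_eq_neg_of_boundary hg' (hasDerivAt_dth (hreg.differentiable two_ne_zero) t)
        (continuous_const.mul hgc) (hslice hφ_θ.continuous)
        (by rw [hg'π, hφπ]),
      ← intervalIntegral.integral_const_mul]
    simp only [neg_neg]
    exact intervalIntegral.integral_congr fun θ _ => by ring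
  have hpde' : ∀ θ, dt (dt φ) t θ * g θ
      = -(g θ * dth (dth φ) t θ) - 2 * (cosh t)⁻¹ ^ 2 * (φ t θ * g θ) := fun θ => by
    linear_combination g θ * hpde t θ
  rw [intervalIntegral.integral_congr fun θ _ => hpde' θ,
    intervalIntegral.integral_sub (f := fun θ => -(g θ * dth (dth φ) t θ))
      (g := fun θ => 2 * (cosh t)⁻¹ ^ 2 * (φ t θ * g θ))
      ((hgc.mul (hslice hφ_θθ)).neg.intervalIntegrable _ _)
      ((continuous_const.mul (hslice hreg.continuous |>.mul hgc)).intervalIntegrable _ _),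
    intervalIntegral.integral_neg, intervalIntegral.integral_const_mul, hparts, jacobiPotential]
  ring

lemma solvesODE2_integral_mul_cos (hreg : ContDiff ℝ 2 (Function.uncurry φ))
    (hper : ∀ t, Function.Periodic (φ t) (2 * π))
    (hpde : ∀ t θ, dt (dt φ) t θ + dth (dth φ) t θ + 2 * (cosh t)⁻¹ ^ 2 * φ t θ = 0)
    (n : ℤ) (β : ℝ) :
    SolvesODE2 (jacobiPotential ((n : ℝ) ^ 2)) (fun t => ∫ θ in -π..π, φ t θ * cos (n * θ + β))
      (fun t => ∫ θ in -π..π, dt φ t θ * cos (n * θ + β)) := by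
  have hlin : ∀ θ, HasDerivAt (fun x : ℝ => n * x + β) n θ := fun θ => by
    simpa using ((hasDerivAt_id θ).const_mul (n : ℝ)).add_const β
  have hshift : n * -π + β = n * π + β - n * (2 * π) := by ring
  refine solvesODE2_integral_mul hreg hper hpde (g' := fun θ => -(n * sin (n * θ + β)))
    (fun θ => ((hasDerivAt_cos _).comp θ (hlin θ)).congr_deriv (by ring))
    (fun θ => (((hasDerivAt_sin _).comp θ (hlin θ)).const_mul (n : ℝ)).neg.congr_deriv (by ring))
    (by fun_prop) ?_ ?_
  · simp only [hshift, cos_sub_int_mul_two_pi]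
  · simp only [hshift, sin_sub_int_mul_two_pi]

lemma abs_integral_mul_le_of_decay {C μ : ℝ} (hdecay : ∀ t θ, |φ t θ| ≤ C * (cosh t)⁻¹ ^ μ)
    (hg : Continuous g) (t : ℝ) :
    |∫ θ in -π..π, φ t θ * g θ| ≤ (C * ∫ θ in -π..π, |g θ|) * (cosh t)⁻¹ ^ μ := by
  calc |∫ θ in -π..π, φ t θ * g θ| = ‖∫ θ in -π..π, φ t θ * g θ‖ := (Real.norm_eq_abs _).symm
    _ ≤ ∫ θ in -π..π, C * (cosh t)⁻¹ ^ μ * |g θ| :=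
      intervalIntegral.norm_integral_le_of_norm_le (by linarith [pi_pos])
        (ae_of_all _ fun θ _ => by
          rw [norm_mul, Real.norm_eq_abs, Real.norm_eq_abs]
          exact mul_le_mul_of_nonneg_right (hdecay t θ) (abs_nonneg _))
        ((continuous_const.mul hg.abs).intervalIntegrable _ _)
    _ = (C * ∫ θ in -π..π, |g θ|) * (cosh t)⁻¹ ^ μ := by
      rw [intervalIntegral.integral_const_mul]; ring

lemma integral_mul_cos_eq_zero {C μ : ℝ} (hμ : 1 < μ) (hreg : ContDiff ℝ 2 (Function.uncurry φ))
    (hper : ∀ t, Function.Periodic (φ t) (2 * π)) (heven : ∀ t θ, φ (-t) θ = φ t θ)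
    (hpde : ∀ t θ, dt (dt φ) t θ + dth (dth φ) t θ + 2 * (cosh t)⁻¹ ^ 2 * φ t θ = 0)
    (hdecay : ∀ t θ, |φ t θ| ≤ C * (cosh t)⁻¹ ^ μ) (n : ℤ) (β t : ℝ) :
    ∫ θ in -π..π, φ t θ * cos (n * θ + β) = 0 :=
  congrFun (eq_zero_of_jacobiPotential_intCast_sq n (solvesODE2_integral_mul_cos hreg hper hpde n β)
    (fun t => by simp only [heven]) hμ (abs_integral_mul_le_of_decay hdecay (by fun_prop))) t

lemma eq_zero_of_integral_mul_cos_eq_zero {f : ℝ → ℝ} (hf : Continuous f)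
    (hp : Function.Periodic f (2 * π))
    (h : ∀ (n : ℤ) (β : ℝ), ∫ θ in -π..π, f θ * cos (n * θ + β) = 0) :
    f = 0 := by
  have : Fact (0 < 2 * π) := ⟨by positivity⟩
  have hpc : Function.Periodic (fun x => (f x : ℂ)) (2 * π) := fun x => by simp [hp x]
  let F : C(AddCircle (2 * π), ℂ) :=
    ⟨hpc.lift, continuous_coinduced_dom.2 (Complex.continuous_ofReal.comp hf)⟩
  have hF : ∀ x : ℝ, F x = f x := hpc.lift_coe
  have hcoeff : ∀ n, fourierCoeff F n = 0 := fun n => by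
    have hexp : ∀ x : ℝ, fourier (-n) (x : AddCircle (2 * π)) • F x =
        ((f x * cos (n * x + 0) : ℝ) : ℂ) + ((f x * cos (n * x + π / 2) : ℝ) : ℂ) * Complex.I := by
      intro x
      have harg : 2 * (π : ℂ) * Complex.I * ((-n : ℤ) : ℂ) * x / ((2 * π : ℝ) : ℂ)
          = ((-(n * x) : ℝ) : ℂ) * Complex.I := by
        push_cast
        field_simp
      rw [hF, fourier_coe_apply, smul_eq_mul, harg, Complex.exp_mul_I, ← Complex.ofReal_cos,
        ← Complex.ofReal_sin, cos_neg, sin_neg, add_zero, cos_add_pi_div_two]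
      push_cast
      ring
    rw [fourierCoeff_eq_intervalIntegral F n (-π), show -π + 2 * π = π by ring,
      intervalIntegral.integral_congr fun x _ => hexp x,
      intervalIntegral.integral_add (Continuous.intervalIntegrable (by fun_prop) _ _)
        (Continuous.intervalIntegrable (by fun_prop) _ _), intervalIntegral.integral_mul_const,
      intervalIntegral.integral_ofReal, intervalIntegral.integral_ofReal, h, h]
    simp
  have hsum : fourierCoeff F = 0 := funext hcoeff
  ext x
  have := has_pointwise_sum_fourier_series_of_summable (f := F) (hsum ▸ summable_zero) x
  simp only [hcoeff, zero_smul] at this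
  have h0 : (f x : ℂ) = 0 := (hF x).symm.trans (this.unique hasSum_zero)
  exact_mod_cast h0

end JacobiLiouville

theorem statement18_general (μ C : ℝ) (hμ : μ ∈ Set.Ioo (1:ℝ) 2) (φ : ℝ → ℝ → ℝ)
    (hreg : ContDiff ℝ 2 (fun p : ℝ × ℝ => φ p.1 p.2))
    (hper : ∀ t, Function.Periodic (fun θ => φ t θ) (2 * Real.pi))
    (heven : ∀ t θ, φ (-t) θ = φ t θ)
    (hpde : ∀ t θ, dt (dt φ) t θ + dth (dth φ) t θ
      + 2 * (1 / Real.cosh t) ^ 2 * φ t θ = 0)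
    (hdecay : ∀ t θ, |φ t θ| ≤ C * (1 / Real.cosh t) ^ μ) :
    ∀ t θ, φ t θ = 0 := by
  simp only [one_div] at hpde hdecay
  intro t
  refine congrFun (JacobiLiouville.eq_zero_of_integral_mul_cos_eq_zero
    (hreg.continuous.comp (continuous_const.prodMk continuous_id)) (hper t) fun n β => ?_)
  exact JacobiLiouville.integral_mul_cos_eq_zero hμ.1 hreg hper heven hpde hdecay n β t

/-- Liouville-type nondegeneracy for the limit Jacobi operator. -/
theorem statement18 (μ C : ℝ) (hμ : μ ∈ Set.Ioo (1:ℝ) 2) (φ : ℝ → ℝ → ℝ)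
    (hreg : ContDiff ℝ 2 (fun p : ℝ × ℝ => φ p.1 p.2))
    (hper : ∀ t, Function.Periodic (fun θ => φ t θ) (2 * Real.pi))
    (heven : ∀ t θ, φ (-t) θ = φ t θ)
    (hsym : ∀ t θ, φ t (Real.pi / 2 - θ) = φ t (Real.pi / 2 + θ))
    (hpde : ∀ t θ, dt (dt φ) t θ + dth (dth φ) t θ
      + 2 * (1 / Real.cosh t) ^ 2 * φ t θ = 0)
    (hdecay : ∀ t θ, |φ t θ| ≤ C * (1 / Real.cosh t) ^ μ) :
    ∀ t θ, φ t θ = 0 :=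
  statement18_general μ C hμ φ hreg hper heven hpde hdecay
end
end
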